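/- Let n ≥ 1, let B = B(0,1) be the open unit ball of ℝⁿ, and let a₁(t,y) = 1_{T_1 B}(t,y) · 1_{[1/2,1]}(t). Then for every 0 < p < ∞ there exist constants 0 < c ≤ C < ∞ depending only on n and p such that c ≤ ‖a₁‖_{T^{p,2}_1} ≤ C, and for every α ≥ 1, c α^{n/p} ≤ ‖a₁‖_{T^{p,2}_α} ≤ C α^{n/p}. -/

import Mathlib

/-!
The square function `A^{(α)} a₁` vanishes off `B(0, α)`, since a cone of aperture `α ≥ 1`
with vertex `x` meets the support `{1/2 ≤ t < 1, |y| < 1 - t}` only if `|x| < α`; on `B(0, α)` it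
is bounded by a constant independent of `α`. Conversely, for `|x| < α/4` the cone over `x`
contains the whole box `(1/2, 3/4] × B(0, 1/4)`, on which `a₁ = 1`. Hence
`‖A^{(α)} a₁‖_{L^p}` is squeezed between constant multiples of `|B(0, α/4)|^{1/p}` and
`|B(0, α)|^{1/p}`, both of order `α^{n/p}`.
-/

open MeasureTheory Metric Set Filter ENNReal

noncomputable section

/-- `ℝⁿ` as a Euclidean space. -/
abbrev En (n : ℕ) : Type := EuclideanSpace ℝ (Fin n)

/-- `g` is (measurable and) locally square integrable on `(0,∞) × ℝⁿ`. -/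
def LocSqInt (n : ℕ) (g : ℝ → En n → ℝ) : Prop :=
  Measurable (Function.uncurry g) ∧
  LocallyIntegrableOn (fun q : ℝ × En n => (g q.1 q.2) ^ 2)
    (Set.Ioi (0 : ℝ) ×ˢ (Set.univ : Set (En n)))

/-- The conical square function `A^{(α)} g (x)` of aperture `α`, with values in `[0,∞]`. -/
def conicalSq (n : ℕ) (α : ℝ) (g : ℝ → En n → ℝ) (x : En n) : ℝ≥0∞ :=
  (∫⁻ t in Set.Ioi (0 : ℝ), ∫⁻ y,
      (ball x (α * t)).indicator (fun y => ENNReal.ofReal (|g t y| ^ 2 / t ^ (n + 1))) y) ^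
    (1 / 2 : ℝ)

/-- The tent space quasi-norm `‖g‖_{T^{p,2}_α} = ‖A^{(α)} g‖_{L^p(ℝⁿ)}`, with values in `[0,∞]`. -/
def tentNorm (n : ℕ) (p α : ℝ) (g : ℝ → En n → ℝ) : ℝ≥0∞ :=
  (∫⁻ x, conicalSq n α g x ^ p) ^ (1 / p)

/-- The vertical square function `V g (x)`. -/
def vertSq (n : ℕ) (g : ℝ → En n → ℝ) (x : En n) : ℝ≥0∞ :=
  (∫⁻ t in Set.Ioi (0 : ℝ), ENNReal.ofReal (|g t x| ^ 2 / t)) ^ (1 / 2 : ℝ)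

/-- `‖V g‖_{L^p(ℝⁿ)}`, with values in `[0,∞]`. -/
def vertNorm (n : ℕ) (p : ℝ) (g : ℝ → En n → ℝ) : ℝ≥0∞ :=
  (∫⁻ x, vertSq n g x ^ p) ^ (1 / p)

/-- The tent `T_α B` of aperture `α` above the ball `B = B(x,r)`. -/
def tent (n : ℕ) (α : ℝ) (x : En n) (r : ℝ) : Set (ℝ × En n) :=
  {q | 0 < q.1 ∧ q.1 < r / α ∧ q.2 ∈ ball x (r - α * q.1)}

/-- `∫_{T_α B} |g(t,y)|² dy dt / t`. -/
def tentIntegral (n : ℕ) (α : ℝ) (g : ℝ → En n → ℝ) (x : En n) (r : ℝ) : ℝ≥0∞ :=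
  ∫⁻ q in tent n α x r, ENNReal.ofReal (|g q.1 q.2| ^ 2 / q.1)

/-- A `T^{p,2}_α`-atom associated with the ball `B(x,r)`: it is supported in the tent
`T_α B(x,r)` and satisfies `∫_{T_α B} |a|² dy dt/t ≤ α^{-n} |B|^{-(2/p - 1)}`. -/
def IsTentAtom (n : ℕ) (p α : ℝ) (a : ℝ → En n → ℝ) (x : En n) (r : ℝ) : Prop :=
  (∀ t y, (t, y) ∉ tent n α x r → a t y = 0) ∧
  tentIntegral n α a x r ≤
    ENNReal.ofReal (α ^ (-(n : ℝ))) * volume (ball x r) ^ (-(2 / p - 1))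

/-- The grand square function `G_λ g (x)` with exponent `nλ`. -/
def grandSq (n : ℕ) (l : ℝ) (g : ℝ → En n → ℝ) (x : En n) : ℝ≥0∞ :=
  (∫⁻ t in Set.Ioi (0 : ℝ), ∫⁻ y,
      ENNReal.ofReal ((t / (dist x y + t)) ^ ((n : ℝ) * l) * |g t y| ^ 2 / t ^ (n + 1))) ^
    (1 / 2 : ℝ)

/-- The example `a₁(t,y) = 1_{T_1 B(0,1)}(t,y) · 1_{[1/2,1]}(t)`. -/
def a1Fun (n : ℕ) : ℝ → En n → ℝ := fun t y =>
  (tent n 1 (0 : En n) 1).indicator (fun _ => (1 : ℝ)) (t, y) *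
    (Set.Icc (1 / 2 : ℝ) 1).indicator (fun _ => (1 : ℝ)) t

namespace ENNReal

lemma rpow_mul_rpow_one_div {p : ℝ} (hp : 0 < p) (a b : ℝ≥0∞) :
    (a ^ p * b) ^ (1 / p) = a * b ^ (1 / p) := by
  rw [mul_rpow_of_nonneg _ _ (by positivity), ← rpow_mul, mul_one_div_cancel hp.ne', rpow_one]

end ENNReal

section LpBounds

variable {X : Type*} [MeasurableSpace X] (μ : Measure X) {f : X → ℝ≥0∞} {s : Set X}
  {p : ℝ}

lemma mul_measure_rpow_le_lintegral_rpow (hs : MeasurableSet s) (hp : 0 < p) {c : ℝ≥0∞}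
    (hf : ∀ x ∈ s, c ≤ f x) :
    c * μ s ^ (1 / p) ≤ (∫⁻ x, f x ^ p ∂μ) ^ (1 / p) := by
  rw [← ENNReal.rpow_mul_rpow_one_div hp, ← setLIntegral_const]
  refine ENNReal.rpow_le_rpow ?_ (by positivity)
  calc ∫⁻ _ in s, c ^ p ∂μ ≤ ∫⁻ x in s, f x ^ p ∂μ :=
        lintegral_mono_ae <| (ae_restrict_mem hs).mono fun x hx => by gcongr; exact hf x hx
    _ ≤ ∫⁻ x, f x ^ p ∂μ := setLIntegral_le_lintegral _ _

lemma lintegral_rpow_le_mul_measure_rpow (hs : MeasurableSet s) (hp : 0 < p) {C : ℝ≥0∞}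
    (hf : ∀ x, f x ≤ s.indicator (fun _ => C) x) :
    (∫⁻ x, f x ^ p ∂μ) ^ (1 / p) ≤ C * μ s ^ (1 / p) := by
  rw [← ENNReal.rpow_mul_rpow_one_div hp, ← lintegral_indicator_const hs]
  gcongr with x
  by_cases hx : x ∈ s
  · simpa [hx] using ENNReal.rpow_le_rpow (by simpa [hx] using hf x) hp.le
  · have hf0 : f x = 0 := by simpa [hx] using hf x
    simp [hx, hf0, ENNReal.zero_rpow_of_pos hp]

end LpBounds

lemma MeasureTheory.Measure.addHaar_ball_mul_rpow {E : Type*} [NormedAddCommGroup E]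
    [NormedSpace ℝ E] [MeasurableSpace E] [BorelSpace E] [FiniteDimensional ℝ E]
    (μ : Measure E) [μ.IsAddHaarMeasure] (x : E) {r : ℝ} (hr : 0 < r) (s : ℝ) {q : ℝ}
    (hq : 0 ≤ q) :
    μ (ball x (r * s)) ^ q =
      ENNReal.ofReal (r ^ ((Module.finrank ℝ E : ℝ) * q)) * μ (ball 0 s) ^ q := by
  rw [Measure.addHaar_ball_mul_of_pos μ x hr, ENNReal.mul_rpow_of_nonneg _ _ hq,
    ENNReal.ofReal_rpow_of_nonneg (by positivity) hq, ← Real.rpow_natCast, ← Real.rpow_mul hr.le]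

lemma a1Fun_apply (n : ℕ) (t : ℝ) (y : En n) :
    a1Fun n t y = if 1 / 2 ≤ t ∧ t < 1 ∧ ‖y‖ < 1 - t then 1 else 0 := by
  simp only [a1Fun, tent, indicator, mem_Icc, mem_ball_zero_iff, div_one, one_mul,
    mul_ite, mul_one, mul_zero]
  grind

section ConicalSquareFunction

variable {n : ℕ} {α : ℝ} {x : En n}

def conicalIntegrand (n : ℕ) (α : ℝ) (g : ℝ → En n → ℝ) (x : En n) (t : ℝ) (y : En n) :
    ℝ≥0∞ :=
  (ball x (α * t)).indicator (fun y => ENNReal.ofReal (|g t y| ^ 2 / t ^ (n + 1))) y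

lemma conicalSq_eq (g : ℝ → En n → ℝ) :
    conicalSq n α g x = (∫⁻ t in Ioi 0, ∫⁻ y, conicalIntegrand n α g x t y) ^ (1 / 2 : ℝ) :=
  rfl

lemma conicalIntegrand_a1Fun (t : ℝ) (y : En n) :
    conicalIntegrand n α (a1Fun n) x t y =
      if dist y x < α * t ∧ 1 / 2 ≤ t ∧ t < 1 ∧ ‖y‖ < 1 - t then
        ENNReal.ofReal (1 / t ^ (n + 1)) else 0 := by
  simp only [conicalIntegrand, a1Fun_apply, indicator, mem_ball]
  split_ifs <;> simp_all
  linarith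

lemma conicalIntegrand_a1Fun_eq_zero (hα : 1 ≤ α) (hx : α ≤ ‖x‖) (t : ℝ) (y : En n) :
    conicalIntegrand n α (a1Fun n) x t y = 0 := by
  rw [conicalIntegrand_a1Fun, if_neg]
  rintro ⟨hyx, -, ht1, hy⟩
  have := norm_le_norm_add_norm_sub' x y
  rw [← dist_eq_norm'] at this
  nlinarith [dist_comm x y]

lemma conicalIntegrand_a1Fun_le (t : ℝ) (y : En n) :
    conicalIntegrand n α (a1Fun n) x t y ≤
      (Icc (1 / 2 : ℝ) 1).indicator (fun _ => ENNReal.ofReal (2 ^ (n + 1))) t *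
        (ball (0 : En n) 1).indicator 1 y := by
  rw [conicalIntegrand_a1Fun]
  split_ifs with h
  · obtain ⟨-, ht, ht1, hy⟩ := h
    rw [indicator_of_mem (mem_Icc.2 ⟨ht, ht1.le⟩), indicator_of_mem (by simp; linarith),
      Pi.one_apply, mul_one]
    gcongr
    rw [div_le_iff₀ (by positivity), ← mul_pow]
    exact one_le_pow₀ (by linarith)
  · exact zero_le

lemma one_le_conicalIntegrand_a1Fun (hα : 1 ≤ α) (hx : ‖x‖ < α / 4) {t : ℝ}
    (ht : t ∈ Ioc (1 / 2 : ℝ) (3 / 4)) {y : En n} (hy : ‖y‖ < 1 / 4) :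
    1 ≤ conicalIntegrand n α (a1Fun n) x t y := by
  obtain ⟨ht, ht'⟩ := ht
  have hyx : dist y x < α * t := by
    have := dist_le_norm_add_norm y x
    nlinarith
  rw [conicalIntegrand_a1Fun, if_pos ⟨hyx, ht.le, by linarith, by linarith⟩, ← ENNReal.ofReal_one]
  gcongr
  rw [le_div_iff₀ (by positivity), one_mul]
  exact pow_le_one₀ (by linarith) (by linarith)

lemma conicalSq_a1Fun_le (x : En n) :
    conicalSq n α (a1Fun n) x ≤
      (ENNReal.ofReal (2 ^ n) * volume (ball (0 : En n) 1)) ^ (1 / 2 : ℝ) := by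
  rw [conicalSq_eq]
  gcongr
  calc ∫⁻ t in Ioi 0, ∫⁻ y, conicalIntegrand n α (a1Fun n) x t y
      ≤ ∫⁻ t in Ioi 0, ∫⁻ y, (Icc (1 / 2 : ℝ) 1).indicator
          (fun _ => ENNReal.ofReal (2 ^ (n + 1))) t * (ball (0 : En n) 1).indicator 1 y := by
        gcongr with t y
        exact conicalIntegrand_a1Fun_le t y
    _ ≤ ∫⁻ t, (Icc (1 / 2 : ℝ) 1).indicator
          (fun _ => ENNReal.ofReal (2 ^ (n + 1))) t * volume (ball (0 : En n) 1) := by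
        simp_rw [lintegral_const_mul _ (measurable_one.indicator measurableSet_ball),
          lintegral_indicator_one measurableSet_ball]
        exact setLIntegral_le_lintegral _ _
    _ = ENNReal.ofReal (2 ^ n) * volume (ball (0 : En n) 1) := by
        rw [lintegral_mul_const' _ _ measure_ball_lt_top.ne,
          lintegral_indicator_const measurableSet_Icc, Real.volume_Icc,
          ← ENNReal.ofReal_mul (by positivity)]
        congr 2
        ring

lemma conicalSq_a1Fun_le_indicator (hα : 1 ≤ α) (x : En n) :
    conicalSq n α (a1Fun n) x ≤ (ball (0 : En n) α).indicator
      (fun _ => (ENNReal.ofReal (2 ^ n) * volume (ball (0 : En n) 1)) ^ (1 / 2 : ℝ)) x := by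
  by_cases hx : x ∈ ball (0 : En n) α
  · rw [indicator_of_mem hx]
    exact conicalSq_a1Fun_le x
  · have hx' : α ≤ ‖x‖ := by simpa using hx
    simp [conicalSq_eq, conicalIntegrand_a1Fun_eq_zero hα hx']

lemma le_conicalSq_a1Fun (hα : 1 ≤ α) (hx : ‖x‖ < α / 4) :
    (ENNReal.ofReal (1 / 4) * volume (ball (0 : En n) (1 / 4))) ^ (1 / 2 : ℝ) ≤
      conicalSq n α (a1Fun n) x := by
  rw [conicalSq_eq]
  gcongr
  calc ENNReal.ofReal (1 / 4) * volume (ball (0 : En n) (1 / 4))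
      = ∫⁻ _ in Ioc (1 / 2 : ℝ) (3 / 4), ∫⁻ y, (ball (0 : En n) (1 / 4)).indicator 1 y := by
        rw [lintegral_indicator_one measurableSet_ball, setLIntegral_const, Real.volume_Ioc,
          mul_comm]
        norm_num
    _ ≤ ∫⁻ t in Ioc (1 / 2 : ℝ) (3 / 4), ∫⁻ y, conicalIntegrand n α (a1Fun n) x t y := by
        refine setLIntegral_mono' measurableSet_Ioc fun t ht => lintegral_mono fun y => ?_
        by_cases hy : y ∈ ball (0 : En n) (1 / 4)
        · rw [indicator_of_mem hy, Pi.one_apply]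
          exact one_le_conicalIntegrand_a1Fun hα hx ht (by simpa using hy)
        · rw [indicator_of_notMem hy]
          exact zero_le
    _ ≤ ∫⁻ t in Ioi 0, ∫⁻ y, conicalIntegrand n α (a1Fun n) x t y :=
        lintegral_mono_set fun t ht => lt_trans (by norm_num) ht.1

end ConicalSquareFunction

section TentNorm

variable {n : ℕ} {p α : ℝ}

lemma volume_ball_mul_rpow_one_div (hp : 0 < p) (hα : 0 < α) (r : ℝ) :
    volume (ball (0 : En n) (α * r)) ^ (1 / p) =
      ENNReal.ofReal (α ^ ((n : ℝ) / p)) * volume (ball (0 : En n) r) ^ (1 / p) := by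
  rw [Measure.addHaar_ball_mul_rpow volume _ hα r (by positivity), finrank_euclideanSpace_fin,
    mul_one_div]

lemma tentNorm_a1Fun_le (hp : 0 < p) (hα : 1 ≤ α) :
    tentNorm n p α (a1Fun n) ≤
      (ENNReal.ofReal (2 ^ n) * volume (ball (0 : En n) 1)) ^ (1 / 2 : ℝ) *
        volume (ball (0 : En n) 1) ^ (1 / p) * ENNReal.ofReal (α ^ ((n : ℝ) / p)) := by
  calc tentNorm n p α (a1Fun n)
      ≤ (ENNReal.ofReal (2 ^ n) * volume (ball (0 : En n) 1)) ^ (1 / 2 : ℝ) *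
          volume (ball (0 : En n) (α * 1)) ^ (1 / p) := by
        rw [mul_one]
        exact lintegral_rpow_le_mul_measure_rpow volume measurableSet_ball hp
          (conicalSq_a1Fun_le_indicator hα)
    _ = _ := by
        rw [volume_ball_mul_rpow_one_div hp (by linarith)]
        ring

lemma le_tentNorm_a1Fun (hp : 0 < p) (hα : 1 ≤ α) :
    (ENNReal.ofReal (1 / 4) * volume (ball (0 : En n) (1 / 4))) ^ (1 / 2 : ℝ) *
        volume (ball (0 : En n) (1 / 4)) ^ (1 / p) * ENNReal.ofReal (α ^ ((n : ℝ) / p)) ≤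
      tentNorm n p α (a1Fun n) := by
  calc _ = (ENNReal.ofReal (1 / 4) * volume (ball (0 : En n) (1 / 4))) ^ (1 / 2 : ℝ) *
          volume (ball (0 : En n) (α * (1 / 4))) ^ (1 / p) := by
        rw [volume_ball_mul_rpow_one_div hp (by linarith)]
        ring
    _ ≤ tentNorm n p α (a1Fun n) :=
        mul_measure_rpow_le_lintegral_rpow volume measurableSet_ball hp fun x hx =>
          le_conicalSq_a1Fun hα (by simpa [div_eq_mul_inv] using hx)

lemma exists_tentNorm_a1Fun_bounds (n : ℕ) (hp : 0 < p) :
    ∃ c C : ℝ≥0∞, 0 < c ∧ C ≠ ⊤ ∧ ∀ α : ℝ, 1 ≤ α →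
      c * ENNReal.ofReal (α ^ ((n : ℝ) / p)) ≤ tentNorm n p α (a1Fun n) ∧
        tentNorm n p α (a1Fun n) ≤ C * ENNReal.ofReal (α ^ ((n : ℝ) / p)) := by
  refine ⟨_, _, ?_, ?_, fun α hα => ⟨le_tentNorm_a1Fun hp hα, tentNorm_a1Fun_le hp hα⟩⟩
  · have hball : 0 < volume (ball (0 : En n) (1 / 4)) := measure_ball_pos _ _ (by norm_num)
    have hfin : volume (ball (0 : En n) (1 / 4)) ≠ ⊤ := measure_ball_lt_top.ne
    refine ENNReal.mul_pos (ENNReal.rpow_pos ?_ ?_).ne' (ENNReal.rpow_pos hball hfin).ne'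
    · exact ENNReal.mul_pos (by simp) hball.ne'
    · exact ENNReal.mul_ne_top ENNReal.ofReal_ne_top hfin
  · have hfin : volume (ball (0 : En n) 1) ≠ ⊤ := measure_ball_lt_top.ne
    exact ENNReal.mul_ne_top
      (ENNReal.rpow_ne_top_of_nonneg (by norm_num) (ENNReal.mul_ne_top ENNReal.ofReal_ne_top hfin))
      (ENNReal.rpow_ne_top_of_nonneg (by positivity) hfin)

end TentNorm

theorem statement15_general (n : ℕ) (p : ℝ) (hp : 0 < p) :
    ∃ c C : ℝ, 0 < c ∧ c ≤ C ∧
      (ENNReal.ofReal c ≤ tentNorm n p 1 (a1Fun n) ∧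
        tentNorm n p 1 (a1Fun n) ≤ ENNReal.ofReal C) ∧
      ∀ α : ℝ, 1 ≤ α →
        ENNReal.ofReal (c * α ^ ((n : ℝ) / p)) ≤ tentNorm n p α (a1Fun n) ∧
        tentNorm n p α (a1Fun n) ≤ ENNReal.ofReal (C * α ^ ((n : ℝ) / p)) := by
  obtain ⟨c, C, hc, hC, hbounds⟩ := exists_tentNorm_a1Fun_bounds n hp
  have hcC : c ≤ C := by simpa using (hbounds 1 le_rfl).1.trans (hbounds 1 le_rfl).2
  have hc_top : c ≠ ⊤ := ne_top_of_le_ne_top hC hcC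
  have hreal : ∀ α : ℝ, 1 ≤ α →
      ENNReal.ofReal (c.toReal * α ^ ((n : ℝ) / p)) ≤ tentNorm n p α (a1Fun n) ∧
        tentNorm n p α (a1Fun n) ≤ ENNReal.ofReal (C.toReal * α ^ ((n : ℝ) / p)) := by
    intro α hα
    rw [ENNReal.ofReal_mul ENNReal.toReal_nonneg, ENNReal.ofReal_mul ENNReal.toReal_nonneg,
      ENNReal.ofReal_toReal hc_top, ENNReal.ofReal_toReal hC]
    exact hbounds α hα
  refine ⟨c.toReal, C.toReal, ENNReal.toReal_pos hc.ne' hc_top, ENNReal.toReal_mono hC hcC,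
    by simpa using hreal 1 le_rfl, hreal⟩

/-- For `a₁` as above, `‖a₁‖_{T^{p,2}_1} ∼ 1` and
`‖a₁‖_{T^{p,2}_α} ∼ α^{n/p}` for `α ≥ 1`, with comparability constants depending
only on `n` and `p`. -/
theorem statement15 (n : ℕ) (hn : 1 ≤ n) (p : ℝ) (hp : 0 < p) :
    ∃ c C : ℝ, 0 < c ∧ c ≤ C ∧
      (ENNReal.ofReal c ≤ tentNorm n p 1 (a1Fun n) ∧
        tentNorm n p 1 (a1Fun n) ≤ ENNReal.ofReal C) ∧
      ∀ α : ℝ, 1 ≤ α →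
        ENNReal.ofReal (c * α ^ ((n : ℝ) / p)) ≤ tentNorm n p α (a1Fun n) ∧
        tentNorm n p α (a1Fun n) ≤ ENNReal.ofReal (C * α ^ ((n : ℝ) / p)) :=
  statement15_general n p hp

end
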